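/- arXiv:2412.06691 — 2 statements merged into one kernel-verified Lean document; each statement's English description precedes it below -/
import Mathlib

section
/- Let α > 0, β ≥ 0, γ > 0 and L > 0 be real numbers, and define H(t) = 1 + 2Lγ/α² − Lβ/α − L t ((γ/α) e^{αt} + γ/α − β)/(e^{αt} − 1) for t > 0. Then H is strictly decreasing on (0, ∞). -/
open Real Set

/- With `F s = s (eˢ + 1) / (eˢ - 1)` and `G s = s / (eˢ - 1)`,
`H t = 1 + 2Lγ/α² - Lβ/α - (Lγ/α²) F(αt) + (Lβ/α) G(αt)`.
`G` is decreasing on `(0, ∞)` because `1 / G` is the slope of the convex function `exp` from `0`,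
and `F` is strictly increasing because its derivative has numerator
`e²ˢ - 1 - 2s eˢ = 2eˢ (sinh s - s) > 0`. -/

theorem strictAntiOn_div_exp_sub_one : StrictAntiOn (fun s : ℝ => s / (exp s - 1)) (Ioi 0) := by
  intro x (hx : 0 < x) y (hy : 0 < y) hxy
  have hslope : (exp x - 1) / x < (exp y - 1) / y := by
    simpa only [exp_zero, sub_zero] using strictConvexOn_exp.secant_strict_mono (mem_univ 0)
      (mem_univ x) (mem_univ y) hx.ne' hy.ne' hxy
  have hslope_pos : 0 < (exp x - 1) / x := div_pos (sub_pos.mpr (one_lt_exp_iff.mpr hx)) hx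
  simpa only [inv_div] using inv_strictAntiOn hslope_pos (hslope_pos.trans hslope) hslope

theorem hasDerivAt_mul_exp_add_one_div_exp_sub_one {s : ℝ} (hs : s ≠ 0) :
    HasDerivAt (fun s : ℝ => s * (exp s + 1) / (exp s - 1))
      ((exp s ^ 2 - 1 - 2 * s * exp s) / (exp s - 1) ^ 2) s := by
  have hden : exp s - 1 ≠ 0 := sub_ne_zero.mpr ((exp_eq_one_iff s).not.mpr hs)
  refine (((hasDerivAt_id' s).mul ((hasDerivAt_exp s).add_const 1)).fun_div
    ((hasDerivAt_exp s).sub_const 1) hden).congr_deriv ?_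
  simp only [Pi.mul_apply]
  ring

theorem exp_sq_sub_one_sub_two_mul_mul_exp_pos {s : ℝ} (hs : 0 < s) :
    0 < exp s ^ 2 - 1 - 2 * s * exp s := by
  have hsinh : s < (exp s - exp (-s)) / 2 := sinh_eq s ▸ self_lt_sinh_iff.mpr hs
  have hprod : exp (-s) * exp s = 1 := by rw [← exp_add, neg_add_cancel, exp_zero]
  nlinarith [exp_pos s]

theorem strictMonoOn_mul_exp_add_one_div_exp_sub_one :
    StrictMonoOn (fun s : ℝ => s * (exp s + 1) / (exp s - 1)) (Ioi 0) := by
  have hderiv (s : ℝ) (hs : s ∈ Ioi 0) := hasDerivAt_mul_exp_add_one_div_exp_sub_one (ne_of_gt hs)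
  refine strictMonoOn_of_deriv_pos (convex_Ioi 0)
    (fun s hs => (hderiv s hs).continuousAt.continuousWithinAt) fun s hs => ?_
  rw [interior_Ioi] at hs
  rw [(hderiv s hs).deriv]
  exact div_pos (exp_sq_sub_one_sub_two_mul_mul_exp_pos hs)
    (pow_pos (sub_pos.mpr (one_lt_exp_iff.mpr hs)) 2)

theorem H_strictAntiOn (α β γ L : ℝ) (hα : 0 < α) (hβ : 0 ≤ β) (hγ : 0 < γ) (hL : 0 < L) :
    StrictAntiOn (fun t : ℝ =>
      1 + 2 * L * γ / α ^ 2 - L * β / α -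
        L * t * ((γ / α) * Real.exp (α * t) + γ / α - β) / (Real.exp (α * t) - 1))
      (Set.Ioi 0) := by
  intro x (hx : 0 < x) y (hy : 0 < y) hxy
  have hαx : α * x ∈ Ioi 0 := mul_pos hα hx
  have hαy : α * y ∈ Ioi 0 := mul_pos hα hy
  have hαxy : α * x < α * y := mul_lt_mul_of_pos_left hxy hα
  have hF := strictMonoOn_mul_exp_add_one_div_exp_sub_one hαx hαy hαxy
  have hG := strictAntiOn_div_exp_sub_one hαx hαy hαxy
  have hsplit (t : ℝ) : L * t * ((γ / α) * exp (α * t) + γ / α - β) / (exp (α * t) - 1) =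
      L * γ / α ^ 2 * (α * t * (exp (α * t) + 1) / (exp (α * t) - 1)) -
        L * β / α * (α * t / (exp (α * t) - 1)) := by
    field_simp
  simp only [hsplit]
  have hFterm := mul_lt_mul_of_pos_left hF (by positivity : 0 < L * γ / α ^ 2)
  have hGterm := mul_le_mul_of_nonneg_left hG.le (by positivity : 0 ≤ L * β / α)
  linarith
end

section
/- Let α > 0, β ≥ 0, γ > 0, L > 0 and define G(t) = 1 − L t e^{αt}((γ/α) e^{αt} + γ/α − β)/(e^{αt} − 1) + (3Lγ/α²) e^{αt} − (2Lβ/α) e^{αt} − Lγ/α² + Lβ/α − (Lγ/α) t e^{αt} for t > 0. Then G is strictly decreasing on (0, ∞). -/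
/-!
With `x = α t`, the derivative of `G` is
`-L eˣ ((γ/α) φ(x) + β ψ(x)) / (eˣ - 1)²` where
`φ(x) = 2x e²ˣ - e²ˣ - 4x eˣ + 4eˣ - 3` and `ψ(x) = 2(eˣ - 1)² - (eˣ - 1) + x`.
For `x > 0` we have `φ(x) > 0`, since `φ(0) = 0` and `φ'(x) = 4x eˣ (eˣ - 1) > 0`, and
`ψ(x) ≥ 0`, which only needs the tangent-line bound `eˣ (1 - x) ≤ 1`.
-/

open Real Set

noncomputable def G (α β γ L t : ℝ) : ℝ :=
  1 - L * t * exp (α * t) * ((γ / α) * exp (α * t) + γ / α - β) / (exp (α * t) - 1)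
    + (3 * L * γ / α ^ 2) * exp (α * t) - (2 * L * β / α) * exp (α * t)
    - L * γ / α ^ 2 + L * β / α - (L * γ / α) * t * exp (α * t)

lemma hasDerivAt_two_mul_mul_exp_sq_sub (x : ℝ) :
    HasDerivAt (fun x => 2 * x * exp x ^ 2 - exp x ^ 2 - 4 * x * exp x + 4 * exp x - 3)
      (4 * x * exp x * (exp x - 1)) x := by
  have he := hasDerivAt_exp x
  have hid := hasDerivAt_id' x
  refine (((((hid.const_mul 2).mul (he.pow 2)).sub (he.pow 2)).sub ((hid.const_mul 4).mul he)
    |>.add (he.const_mul 4)).sub_const 3).congr_deriv ?_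
  norm_num
  ring

lemma two_mul_mul_exp_sq_sub_pos {x : ℝ} (hx : 0 < x) :
    0 < 2 * x * exp x ^ 2 - exp x ^ 2 - 4 * x * exp x + 4 * exp x - 3 := by
  have hmono : StrictMonoOn
      (fun x => 2 * x * exp x ^ 2 - exp x ^ 2 - 4 * x * exp x + 4 * exp x - 3) (Ici 0) := by
    refine strictMonoOn_of_hasDerivWithinAt_pos (convex_Ici 0) (by fun_prop)
      (fun y _ => (hasDerivAt_two_mul_mul_exp_sq_sub y).hasDerivWithinAt) fun y hy => ?_
    rw [interior_Ici, mem_Ioi] at hy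
    have : 1 < exp y := one_lt_exp_iff.2 hy
    exact mul_pos (by positivity) (by linarith)
  have := hmono self_mem_Ici hx.le hx
  norm_num at this
  linarith

lemma exp_mul_one_sub_le_one (x : ℝ) : exp x * (1 - x) ≤ 1 := by
  have := add_one_le_exp (-x)
  calc exp x * (1 - x) ≤ exp x * exp (-x) := by gcongr; linarith
    _ = 1 := by rw [← exp_add, add_neg_cancel, exp_zero]

lemma two_mul_exp_sub_one_sq_sub_add_nonneg {x : ℝ} (hx : 0 ≤ x) :
    0 ≤ 2 * (exp x - 1) ^ 2 - (exp x - 1) + x := by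
  have hscaled : exp x * (2 * (exp x - 1) ^ 2 - (exp x - 1) + x)
      = (exp x - 1) ^ 2 * (2 * exp x - 1) + (1 - exp x * (1 - x)) := by ring
  have h1 : 1 ≤ exp x := one_le_exp hx
  refine nonneg_of_mul_nonneg_right (hscaled ▸ add_nonneg ?_ ?_) (exp_pos x)
  · exact mul_nonneg (sq_nonneg _) (by linarith)
  · linarith [exp_mul_one_sub_le_one x]

lemma hasDerivAt_G {α : ℝ} (β γ L : ℝ) (hα : α ≠ 0) {t : ℝ} (ht : t ≠ 0) :
    HasDerivAt (G α β γ L)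
      (-(L * exp (α * t) *
          ((γ / α) * (2 * (α * t) * exp (α * t) ^ 2 - exp (α * t) ^ 2
              - 4 * (α * t) * exp (α * t) + 4 * exp (α * t) - 3)
            + β * (2 * (exp (α * t) - 1) ^ 2 - (exp (α * t) - 1) + α * t))) /
        (exp (α * t) - 1) ^ 2) t := by
  have hden : exp (α * t) - 1 ≠ 0 := sub_ne_zero.2 (mt (exp_eq_one_iff _).1 (mul_ne_zero hα ht))
  have hE : HasDerivAt (fun s => exp (α * s)) (exp (α * t) * α) t := by
    simpa using ((hasDerivAt_id t).const_mul α).exp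
  have hs := hasDerivAt_id' t
  have hquot := ((((hs.const_mul L).mul hE).mul
      (((hE.const_mul (γ / α)).add_const (γ / α)).sub_const β))).div (hE.sub_const 1) hden
  refine (((((((hasDerivAt_const t (1 : ℝ)).sub hquot).add (hE.const_mul (3 * L * γ / α ^ 2))).sub
      (hE.const_mul (2 * L * β / α))).sub_const (L * γ / α ^ 2)).add_const (L * β / α)).sub
      ((hs.const_mul (L * γ / α)).mul hE)).congr_deriv ?_
  simp only [Pi.mul_apply]
  field_simp
  ring

lemma G_deriv_neg {α β γ L x : ℝ} (hα : 0 < α) (hβ : 0 ≤ β) (hγ : 0 < γ) (hL : 0 < L)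
    (hx : 0 < x) :
    -(L * exp x * ((γ / α) * (2 * x * exp x ^ 2 - exp x ^ 2 - 4 * x * exp x + 4 * exp x - 3)
        + β * (2 * (exp x - 1) ^ 2 - (exp x - 1) + x))) / (exp x - 1) ^ 2 < 0 := by
  have hφ := two_mul_mul_exp_sq_sub_pos hx
  have hψ := two_mul_exp_sub_one_sq_sub_add_nonneg hx.le
  have hden : 0 < exp x - 1 := sub_pos.2 (one_lt_exp_iff.2 hx)
  refine div_neg_of_neg_of_pos (neg_neg_of_pos ?_) (by positivity)
  exact mul_pos (by positivity) (add_pos_of_pos_of_nonneg (by positivity) (by positivity))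

theorem G_strictAntiOn (α β γ L : ℝ) (hα : 0 < α) (hβ : 0 ≤ β) (hγ : 0 < γ) (hL : 0 < L) :
    StrictAntiOn (fun t : ℝ =>
      1 - L * t * Real.exp (α * t) * ((γ / α) * Real.exp (α * t) + γ / α - β) /
          (Real.exp (α * t) - 1)
        + (3 * L * γ / α ^ 2) * Real.exp (α * t) - (2 * L * β / α) * Real.exp (α * t)
        - L * γ / α ^ 2 + L * β / α - (L * γ / α) * t * Real.exp (α * t))
      (Set.Ioi 0) := by
  change StrictAntiOn (G α β γ L) (Ioi 0)
  have hderiv : ∀ t ∈ Ioi (0 : ℝ), HasDerivAt (G α β γ L) _ t :=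
    fun t ht => hasDerivAt_G β γ L hα.ne' (ne_of_gt ht)
  refine strictAntiOn_of_hasDerivWithinAt_neg (convex_Ioi 0)
    (fun t ht => (hderiv t ht).continuousAt.continuousWithinAt)
    (fun t ht => (hderiv t (interior_subset ht)).hasDerivWithinAt) fun t ht => ?_
  rw [interior_Ioi] at ht
  exact G_deriv_neg hα hβ hγ hL (mul_pos hα ht)
end
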